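/- Assume d ≥ 1 and fix an integer d₀ ≥ 1. For each fixed real s, the function α ↦ ε(α, s) is a polynomial in α of degree d + d₀, and its coefficient of α^{d+d₀-1} equals μ^{-d}·((D^{d-1}χ̃)(d)/(d-1)!)·s - (d+d₀)(d+d₀+1)/2. -/

import Mathlib

/-- Backward difference operator: `(D f)(x) = f x - f (x-1)`. -/
noncomputable def bdiff (f : ℝ → ℝ) : ℝ → ℝ := fun x => f x - f (x - 1)

/-- `d = r(r-1)a/2 + rb + r`. -/
def dInv (r a b : ℕ) : ℕ := r * (r - 1) * a / 2 + r * b + r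

/-- `p = (r-1)a + b + 2`. -/
def pInv (r a b : ℕ) : ℕ := (r - 1) * a + b + 2

/-- The function `χ̃(x) = ∏_{j=1}^r (μx - p + 1 + (j-1)a/2)_{1+b+(r-j)a}`. -/
noncomputable def chiF (r a b : ℕ) (μ : ℝ) : ℝ → ℝ := fun x =>
  ∏ j ∈ Finset.Icc 1 r,
    (ascPochhammer ℝ (1 + b + (r - j) * a)).eval
      (μ * x - (pInv r a b : ℝ) + 1 + ((j : ℝ) - 1) * a / 2)

/-- The explicit Rawnsley ε-function of the Cartan–Hartogs domain `Ω^{B^{d₀}}(μ)`: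
`ε(α,s) = μ^{-d} ∑_{k=0}^d ((D^k χ̃)(d)/k!) s^{d-k} (α-d-d₀)_{k+d₀}`,
where `s = 1 - ‖w‖²/N(z,z̄)^μ`. -/
noncomputable def eps (r a b d₀ : ℕ) (μ : ℝ) (α s : ℝ) : ℝ :=
  (1 / μ ^ dInv r a b) *
    ∑ k ∈ Finset.range (dInv r a b + 1),
      (bdiff^[k] (chiF r a b μ) (dInv r a b : ℝ) / (Nat.factorial k : ℝ)) *
        s ^ (dInv r a b - k) *
        (ascPochhammer ℝ (k + d₀)).eval (α - (dInv r a b : ℝ) - (d₀ : ℝ))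


/-!
Every summand of `ε(·, s)` is a multiple of the shifted Pochhammer polynomial
`α ↦ (α - d - d₀)_{k+d₀}`, which is monic of degree `k + d₀`. So only `k = d` reaches degree
`d + d₀`, with coefficient `μ^{-d} (D^d χ̃)(d) / d!`; as `χ̃` is a polynomial of degree `d` with
leading coefficient `μ^d`, its `d`-th difference is the constant `d! μ^d`, and this coefficient
is `1`. In degree `d + d₀ - 1` only `k = d - 1` (through its leading coefficient) and `k = d`
(through the subleading coefficient `N(N-1)/2 - N² = -N(N+1)/2` of `(α - N)_N`, `N = d + d₀`)
contribute.
-/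

open Polynomial Finset
open scoped Nat

lemma bdiff_iterate_apply (f : ℝ → ℝ) (k : ℕ) (x : ℝ) :
    bdiff^[k] f x = (fwdDiff 1)^[k] f (x - k) := by
  induction k generalizing x with
  | zero => simp
  | succ k ih =>
    rw [Function.iterate_succ_apply', bdiff, ih, ih, Function.iterate_succ_apply', fwdDiff]
    push_cast
    ring_nf

lemma bdiff_iterate_natDegree_eval (P : ℝ[X]) (x : ℝ) :
    bdiff^[P.natDegree] P.eval x = P.natDegree ! * P.leadingCoeff := by
  rw [bdiff_iterate_apply, P.fwdDiff_iter_degree_eq_factorial]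
  simp [mul_comm]

lemma monic_ascPochhammer_comp_X_sub_C {R : Type*} [CommRing R] [IsDomain R] (n : ℕ) (c : R) :
    ((ascPochhammer R n).comp (X - C c)).Monic :=
  (monic_ascPochhammer R n).comp_X_sub_C c

lemma natDegree_ascPochhammer_comp_X_sub_C {R : Type*} [CommRing R] [IsDomain R] (n : ℕ)
    (c : R) : ((ascPochhammer R n).comp (X - C c)).natDegree = n := by
  rw [natDegree_comp, natDegree_X_sub_C, ascPochhammer_natDegree, mul_one]

lemma ascPochhammer_comp_X_sub_C {R : Type*} [CommRing R] (n : ℕ) (c : R) :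
    (ascPochhammer R n).comp (X - C c) = ∏ i ∈ range n, (X - C (c - i)) := by
  induction n with
  | zero => simp
  | succ n ih =>
    rw [ascPochhammer_succ_right, mul_comp, ih, prod_range_succ]
    simp only [add_comp, X_comp, natCast_comp, map_sub, map_natCast]
    ring

lemma sum_range_natCast_mul_two {R : Type*} [CommRing R] (n : ℕ) :
    (∑ i ∈ range n, (i : R)) * 2 = n * (n - 1) := by
  induction n with
  | zero => simp
  | succ n ih => rw [sum_range_succ, add_mul, ih]; push_cast; ring

lemma nextCoeff_ascPochhammer_comp_X_sub_C {R : Type*} [CommRing R] (n : ℕ) (c : R) :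
    ((ascPochhammer R n).comp (X - C c)).nextCoeff * 2 = n * (n - 1) - 2 * n * c := by
  rw [ascPochhammer_comp_X_sub_C, prod_X_sub_C_nextCoeff, sum_sub_distrib, neg_sub, sub_mul,
    sum_range_natCast_mul_two, sum_const, card_range, nsmul_eq_mul]
  ring

noncomputable def chiPoly (r a b : ℕ) (μ : ℝ) : ℝ[X] :=
  ∏ j ∈ Icc 1 r, (ascPochhammer ℝ (1 + b + (r - j) * a)).comp
    (C μ * X + C (1 + ((j : ℝ) - 1) * a / 2 - pInv r a b))

lemma eval_chiPoly (r a b : ℕ) (μ x : ℝ) : (chiPoly r a b μ).eval x = chiF r a b μ x := by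
  simp only [chiPoly, chiF, eval_prod, eval_comp, eval_add, eval_mul, eval_C, eval_X]
  refine prod_congr rfl fun j _ => ?_
  congr 1
  ring

lemma sum_Icc_sub_eq_sum_range (r : ℕ) : ∑ j ∈ Icc 1 r, (r - j) = ∑ i ∈ range r, i := by
  refine sum_nbij' (fun j => r - j) (fun i => r - i) ?_ ?_ ?_ ?_ fun _ _ => rfl <;>
    intro j hj <;> simp only [mem_Icc, mem_range] at hj ⊢ <;> omega

lemma sum_Icc_chiPoly_degrees (r a b : ℕ) :
    ∑ j ∈ Icc 1 r, (1 + b + (r - j) * a) = dInv r a b := by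
  have gauss := sum_range_id_mul_two r
  rw [sum_add_distrib, ← sum_mul, sum_Icc_sub_eq_sum_range, sum_const, Nat.card_Icc, dInv,
    ← gauss, mul_right_comm, Nat.mul_div_cancel _ two_pos]
  simp only [smul_eq_mul, Nat.add_sub_cancel]
  ring

section ChiPoly

variable {r a b : ℕ} {μ : ℝ}

lemma natDegree_ascPochhammer_comp_linear (hμ : μ ≠ 0) (n : ℕ) (c : ℝ) :
    ((ascPochhammer ℝ n).comp (C μ * X + C c)).natDegree = n := by
  rw [natDegree_comp, natDegree_linear hμ, ascPochhammer_natDegree, mul_one]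

lemma leadingCoeff_ascPochhammer_comp_linear (hμ : μ ≠ 0) (n : ℕ) (c : ℝ) :
    ((ascPochhammer ℝ n).comp (C μ * X + C c)).leadingCoeff = μ ^ n := by
  rw [leadingCoeff_comp (by rw [natDegree_linear hμ]; exact one_ne_zero), leadingCoeff_linear hμ,
    (monic_ascPochhammer ℝ n).leadingCoeff, ascPochhammer_natDegree, one_mul]

lemma natDegree_chiPoly (hμ : μ ≠ 0) : (chiPoly r a b μ).natDegree = dInv r a b := by
  rw [chiPoly, natDegree_prod, ← sum_Icc_chiPoly_degrees]
  · exact sum_congr rfl fun j _ => natDegree_ascPochhammer_comp_linear hμ _ _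
  · intro j _
    rw [← leadingCoeff_ne_zero, leadingCoeff_ascPochhammer_comp_linear hμ]
    exact pow_ne_zero _ hμ

lemma leadingCoeff_chiPoly (hμ : μ ≠ 0) : (chiPoly r a b μ).leadingCoeff = μ ^ dInv r a b := by
  rw [chiPoly, leadingCoeff_prod, ← sum_Icc_chiPoly_degrees, ← prod_pow_eq_pow_sum]
  exact prod_congr rfl fun j _ => leadingCoeff_ascPochhammer_comp_linear hμ _ _

lemma bdiff_iterate_dInv_chiF (hμ : μ ≠ 0) (x : ℝ) :
    bdiff^[dInv r a b] (chiF r a b μ) x = (dInv r a b)! * μ ^ dInv r a b := by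
  have hχ : chiF r a b μ = (chiPoly r a b μ).eval := funext fun y => (eval_chiPoly r a b μ y).symm
  rw [hχ, ← natDegree_chiPoly hμ, bdiff_iterate_natDegree_eval, leadingCoeff_chiPoly hμ,
    natDegree_chiPoly hμ]

end ChiPoly

section MonicCombination

variable {R : Type*} [CommRing R] {B : ℕ → R[X]} {m : ℕ}

lemma natDegree_sum_C_mul_le (hB : ∀ k, (B k).natDegree = k + m) (c : ℕ → R) (n : ℕ) :
    (∑ k ∈ range (n + 1), C (c k) * B k).natDegree ≤ n + m :=
  natDegree_sum_le_of_forall_le _ _ fun k hk =>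
    (natDegree_C_mul_le _ _).trans (by rw [hB]; simp only [mem_range] at hk; omega)

lemma coeff_sum_C_mul_of_monic (hmonic : ∀ k, (B k).Monic) (hB : ∀ k, (B k).natDegree = k + m)
    (c : ℕ → R) (n : ℕ) : (∑ k ∈ range (n + 1), C (c k) * B k).coeff (n + m) = c n := by
  rw [finsetSum_coeff, sum_range_succ, sum_eq_zero, zero_add, coeff_C_mul, ← hB,
    (hmonic n).coeff_natDegree, mul_one]
  intro k hk
  rw [coeff_C_mul, coeff_eq_zero_of_natDegree_lt (by rw [hB]; simp only [mem_range] at hk; omega),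
    mul_zero]

lemma coeff_sum_C_mul_of_monic_sub_one (hmonic : ∀ k, (B k).Monic)
    (hB : ∀ k, (B k).natDegree = k + m) (c : ℕ → R) {n : ℕ} (hn : 1 ≤ n) :
    (∑ k ∈ range (n + 1), C (c k) * B k).coeff (n + m - 1) =
      c (n - 1) + c n * (B n).nextCoeff := by
  obtain ⟨n, rfl⟩ := Nat.exists_eq_add_of_le' hn
  rw [sum_range_succ, coeff_add, show n + 1 + m - 1 = n + m by omega,
    coeff_sum_C_mul_of_monic hmonic hB, coeff_C_mul,
    nextCoeff_of_natDegree_pos (by rw [hB]; omega), hB, Nat.add_sub_cancel,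
    show n + 1 + m - 1 = n + m by omega]

end MonicCombination

noncomputable def epsPoly (r a b d₀ : ℕ) (μ s : ℝ) : ℝ[X] :=
  C (1 / μ ^ dInv r a b) * ∑ k ∈ range (dInv r a b + 1),
    C (bdiff^[k] (chiF r a b μ) (dInv r a b) / k ! * s ^ (dInv r a b - k)) *
      (ascPochhammer ℝ (k + d₀)).comp (X - C ((dInv r a b : ℝ) + d₀))

section EpsPoly

variable {r a b d₀ : ℕ} {μ s : ℝ}

lemma eval_epsPoly (α : ℝ) : (epsPoly r a b d₀ μ s).eval α = eps r a b d₀ μ α s := by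
  simp only [epsPoly, eps, eval_mul, eval_C, eval_finsetSum, eval_comp, eval_sub, eval_X, sub_sub]

lemma coeff_epsPoly_top (hμ : μ ≠ 0) : (epsPoly r a b d₀ μ s).coeff (dInv r a b + d₀) = 1 := by
  rw [epsPoly, coeff_C_mul,
    coeff_sum_C_mul_of_monic (fun _ => monic_ascPochhammer_comp_X_sub_C _ _)
      (fun _ => natDegree_ascPochhammer_comp_X_sub_C _ _),
    bdiff_iterate_dInv_chiF hμ, Nat.sub_self]
  field_simp

lemma degree_epsPoly (hμ : μ ≠ 0) :
    (epsPoly r a b d₀ μ s).degree = ((dInv r a b + d₀ : ℕ) : WithBot ℕ) := by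
  refine degree_eq_of_le_of_coeff_ne_zero ?_ (by rw [coeff_epsPoly_top hμ]; exact one_ne_zero)
  exact natDegree_le_iff_degree_le.mp <| (natDegree_C_mul_le _ _).trans <|
    natDegree_sum_C_mul_le (fun _ => natDegree_ascPochhammer_comp_X_sub_C _ _) _ _

lemma coeff_epsPoly_sub_one (hμ : μ ≠ 0) (hd : 1 ≤ dInv r a b) :
    (epsPoly r a b d₀ μ s).coeff (dInv r a b + d₀ - 1) =
      (1 / μ ^ dInv r a b) * (bdiff^[dInv r a b - 1] (chiF r a b μ) (dInv r a b : ℝ) /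
        (dInv r a b - 1)! : ℝ) * s -
        ((dInv r a b : ℝ) + d₀) * ((dInv r a b : ℝ) + d₀ + 1) / 2 := by
  have hnext := nextCoeff_ascPochhammer_comp_X_sub_C (dInv r a b + d₀) ((dInv r a b : ℝ) + d₀)
  rw [epsPoly, coeff_C_mul, coeff_sum_C_mul_of_monic_sub_one
    (fun _ => monic_ascPochhammer_comp_X_sub_C _ _)
    (fun _ => natDegree_ascPochhammer_comp_X_sub_C _ _) _ hd, bdiff_iterate_dInv_chiF hμ,
    Nat.sub_self, Nat.sub_sub_self hd]
  rw [mul_div_cancel_left₀ _ (Nat.cast_ne_zero.mpr (Nat.factorial_ne_zero _)), pow_zero, pow_one,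
    mul_one, mul_add, one_div, inv_mul_cancel_left₀ (pow_ne_zero _ hμ)]
  push_cast at hnext
  linear_combination hnext / 2

end EpsPoly

theorem stmt11_general (r a b d₀ : ℕ) (μ : ℝ) (hμ : 0 < μ)
    (hd : 1 ≤ dInv r a b) (s : ℝ) :
    ∃ Q : Polynomial ℝ, (∀ α : ℝ, Q.eval α = eps r a b d₀ μ α s) ∧
      Q.degree = ((dInv r a b + d₀ : ℕ) : WithBot ℕ) ∧
      Q.coeff (dInv r a b + d₀ - 1) =
        (1 / μ ^ dInv r a b) *
            (bdiff^[dInv r a b - 1] (chiF r a b μ) (dInv r a b : ℝ) /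
              (Nat.factorial (dInv r a b - 1) : ℝ)) * s -
          ((dInv r a b : ℝ) + (d₀ : ℝ)) * ((dInv r a b : ℝ) + (d₀ : ℝ) + 1) / 2 :=
  ⟨epsPoly r a b d₀ μ s, eval_epsPoly, degree_epsPoly hμ.ne', coeff_epsPoly_sub_one hμ.ne' hd⟩

theorem stmt11 (r a b d₀ : ℕ) (hr : 1 ≤ r) (hd₀ : 1 ≤ d₀) (μ : ℝ) (hμ : 0 < μ)
    (hd : 1 ≤ dInv r a b) (s : ℝ) :
    ∃ Q : Polynomial ℝ, (∀ α : ℝ, Q.eval α = eps r a b d₀ μ α s) ∧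
      Q.degree = ((dInv r a b + d₀ : ℕ) : WithBot ℕ) ∧
      Q.coeff (dInv r a b + d₀ - 1) =
        (1 / μ ^ dInv r a b) *
            (bdiff^[dInv r a b - 1] (chiF r a b μ) (dInv r a b : ℝ) /
              (Nat.factorial (dInv r a b - 1) : ℝ)) * s -
          ((dInv r a b : ℝ) + (d₀ : ℝ)) * ((dInv r a b : ℝ) + (d₀ : ℝ) + 1) / 2 :=
  stmt11_general r a b d₀ μ hμ hd s
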